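/- Let φ : M₃(ℂ) → M₃(ℂ) be a positive map determined by parameters b₁, b₂, c₁, c₂ ∈ ℂ and δ₁, δ₂, σ₁, σ₂ ≥ 0, with ε_i = |b_i| + |c_i|, given by φ(X) = [[(ε₁²+δ₁²)x₁₁ + σ₂²x₂₂, 0, b₁x₁₃ + c₁x₃₁], [0, (ε₂²+δ₂²)x₂₂ + σ₁²x₁₁, b₂x₂₃ + c₂x₃₂], [conj(b₁)x₃₁ + conj(c₁)x₁₃, conj(b₂)x₃₂ + conj(c₂)x₂₃, x₃₃]]. Set b⃗ = (|b₁|, |b₂|), c⃗ = (|c₁|, |c₂|), s = max(‖b⃗‖, ‖c⃗‖), δ = √(δ₁² + δ₂²), ε = √(ε₁² + ε₂²). If b⃗ ≠ 0, c⃗ ≠ 0, and s·√(ε² + δ²) < ‖b⃗‖² + ‖c⃗‖², then φ is not decomposable. -/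

import Mathlib

open scoped ComplexOrder
open Matrix

noncomputable section
namespace Paper

/-- A map between matrix algebras is positive if it sends positive semidefinite
matrices to positive semidefinite matrices. -/
def IsPosMap {m n : Type*} [Fintype m] [Fintype n]
    (φ : Matrix m m ℂ → Matrix n n ℂ) : Prop :=
  ∀ X : Matrix m m ℂ, X.PosSemidef → (φ X).PosSemidef

/-- The rank one operator `ηη*`, i.e. `ζ ↦ ⟨η, ζ⟩ η`. -/
def rankOne {m : Type*} (η : m → ℂ) : Matrix m m ℂ :=
  Matrix.vecMulVec η (star η)

/-- The Choi matrix `∑ E_{ij} ⊗ φ(E_{ij})` of a map `φ`. -/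
def choi {m n : Type*} [Fintype m] [DecidableEq m]
    (φ : Matrix m m ℂ → Matrix n n ℂ) : Matrix (m × n) (m × n) ℂ :=
  Matrix.of fun p q => φ (Matrix.single p.1 q.1 1) p.2 q.2

/-- A map is completely positive iff its Choi matrix is positive semidefinite. -/
def IsCP {m n : Type*} [Fintype m] [DecidableEq m] [Fintype n]
    (φ : Matrix m m ℂ → Matrix n n ℂ) : Prop :=
  (choi φ).PosSemidef

/-- A map is completely copositive iff `X ↦ φ(Xᵀ)` is completely positive. -/
def IsCCP {m n : Type*} [Fintype m] [DecidableEq m] [Fintype n]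
    (φ : Matrix m m ℂ → Matrix n n ℂ) : Prop :=
  IsCP fun X => φ Xᵀ

/-- A map is decomposable iff it is the sum of a completely positive and a
completely copositive (linear) map. -/
def Decomposable {m n : Type*} [Fintype m] [DecidableEq m] [Fintype n]
    (φ : Matrix m m ℂ → Matrix n n ℂ) : Prop :=
  ∃ φ₁ φ₂ : Matrix m m ℂ →ₗ[ℂ] Matrix n n ℂ,
    IsCP (⇑φ₁) ∧ IsCCP (⇑φ₂) ∧ ∀ X, φ X = φ₁ X + φ₂ X

/-- The ampliation `id_{M₂(ℂ)} ⊗ φ`. -/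
def ampl2 {m n : Type*} (φ : Matrix m m ℂ → Matrix n n ℂ)
    (Y : Matrix (Fin 2 × m) (Fin 2 × m) ℂ) : Matrix (Fin 2 × n) (Fin 2 × n) ℂ :=
  Matrix.of fun p q => φ (Matrix.of fun a b => Y (p.1, a) (q.1, b)) p.2 q.2

/-- The ampliation `tran_{M₂(ℂ)} ⊗ φ`. -/
def ampl2T {m n : Type*} (φ : Matrix m m ℂ → Matrix n n ℂ)
    (Y : Matrix (Fin 2 × m) (Fin 2 × m) ℂ) : Matrix (Fin 2 × n) (Fin 2 × n) ℂ :=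
  Matrix.of fun p q => φ (Matrix.of fun a b => Y (q.1, a) (p.1, b)) p.2 q.2

/-- `φ` is 2-positive if `id_{M₂(ℂ)} ⊗ φ` is positive. -/
def Is2Pos {m n : Type*} [Fintype m] [Fintype n]
    (φ : Matrix m m ℂ → Matrix n n ℂ) : Prop :=
  IsPosMap (ampl2 φ)

/-- `φ` is 2-copositive if `tran_{M₂(ℂ)} ⊗ φ` is positive. -/
def Is2Copos {m n : Type*} [Fintype m] [Fintype n]
    (φ : Matrix m m ℂ → Matrix n n ℂ) : Prop :=
  IsPosMap (ampl2T φ)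

/-- A positive map `φ` is exposed if every positive (linear) map `ψ` vanishing
(in the sense `⟨y, ψ(ηη*) y⟩ = 0`) wherever `φ` vanishes is a nonnegative
multiple of `φ`. -/
def IsExposed {m n : Type*} [Fintype m] [Fintype n]
    (φ : Matrix m m ℂ → Matrix n n ℂ) : Prop :=
  IsPosMap φ ∧
    ∀ ψ : Matrix m m ℂ →ₗ[ℂ] Matrix n n ℂ, IsPosMap ⇑ψ →
      (∀ (η : m → ℂ) (y : n → ℂ),
        star y ⬝ᵥ (φ (rankOne η)).mulVec y = 0 →
          star y ⬝ᵥ (ψ (rankOne η)).mulVec y = 0) →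
      ∃ c : ℝ, 0 ≤ c ∧ ∀ X, ψ X = (c : ℂ) • φ X

/-- A positive map `φ` is optimal if there is no nonzero completely positive map
`ψ` with `φ − ψ` positive. -/
def IsOptimal {m n : Type*} [Fintype m] [DecidableEq m] [Fintype n]
    (φ : Matrix m m ℂ → Matrix n n ℂ) : Prop :=
  ¬∃ ψ : Matrix m m ℂ →ₗ[ℂ] Matrix n n ℂ,
      ψ ≠ 0 ∧ IsCP (⇑ψ) ∧ IsPosMap fun X => φ X - ψ X

/-- The index type of the direct sum `ℂᵃ ⊕ ℂᵇ ⊕ ℂ`. -/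
abbrev TI (a b : ℕ) := Fin a ⊕ (Fin b ⊕ Unit)

/-- The index of the distinguished one-dimensional summand. -/
def tidx {a b : ℕ} : TI a b := Sum.inr (Sum.inr ())

/-- Block `X₁₁` of a matrix on `ℂᵃ ⊕ ℂᵇ ⊕ ℂ`. -/
def blk11 {a b : ℕ} (X : Matrix (TI a b) (TI a b) ℂ) : Matrix (Fin a) (Fin a) ℂ :=
  Matrix.of fun i j => X (Sum.inl i) (Sum.inl j)

/-- Block `X₂₂`. -/
def blk22 {a b : ℕ} (X : Matrix (TI a b) (TI a b) ℂ) : Matrix (Fin b) (Fin b) ℂ :=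
  Matrix.of fun i j => X (Sum.inr (Sum.inl i)) (Sum.inr (Sum.inl j))

/-- Block `X₁₃`, viewed as a column vector. -/
def blk13 {a b : ℕ} (X : Matrix (TI a b) (TI a b) ℂ) : Fin a → ℂ :=
  fun i => X (Sum.inl i) tidx

/-- Block `X₃₁` (equivalently, the vector `X₃₁ᵀ`). -/
def blk31 {a b : ℕ} (X : Matrix (TI a b) (TI a b) ℂ) : Fin a → ℂ :=
  fun i => X tidx (Sum.inl i)

/-- Block `X₂₃`, viewed as a column vector. -/
def blk23 {a b : ℕ} (X : Matrix (TI a b) (TI a b) ℂ) : Fin b → ℂ :=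
  fun i => X (Sum.inr (Sum.inl i)) tidx

/-- Block `X₃₂` (equivalently, the vector `X₃₂ᵀ`). -/
def blk32 {a b : ℕ} (X : Matrix (TI a b) (TI a b) ℂ) : Fin b → ℂ :=
  fun i => X tidx (Sum.inr (Sum.inl i))

/-- `P` is the orthogonal projection onto the range of `A`: it is Hermitian,
idempotent, and has the same range as `A`. -/
def IsOrthProjOnRange {n m : Type*} [Fintype n] [Fintype m]
    (P : Matrix n n ℂ) (A : Matrix n m ℂ) : Prop :=
  P.IsHermitian ∧ P * P = P ∧
    LinearMap.range P.mulVecLin = LinearMap.range A.mulVecLin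

/-- The merging of the maps `φ₁`, `φ₂` by means of the operators `B₁, C₁, B₂, C₂`,
the functionals `ω₁, ω₂`, with `P₁, P₂` the orthogonal projections onto the ranges
of `φ₁(1)`, `φ₂(1)`. -/
def merging {k₁ k₂ h₁ h₂ : ℕ}
    (φ₁ : Matrix (Fin k₁) (Fin k₁) ℂ →ₗ[ℂ] Matrix (Fin h₁) (Fin h₁) ℂ)
    (φ₂ : Matrix (Fin k₂) (Fin k₂) ℂ →ₗ[ℂ] Matrix (Fin h₂) (Fin h₂) ℂ)
    (B₁ C₁ : Matrix (Fin h₁) (Fin k₁) ℂ) (B₂ C₂ : Matrix (Fin h₂) (Fin k₂) ℂ)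
    (ω₁ : Matrix (Fin k₁) (Fin k₁) ℂ →ₗ[ℂ] ℂ) (ω₂ : Matrix (Fin k₂) (Fin k₂) ℂ →ₗ[ℂ] ℂ)
    (P₁ : Matrix (Fin h₁) (Fin h₁) ℂ) (P₂ : Matrix (Fin h₂) (Fin h₂) ℂ)
    (X : Matrix (TI k₁ k₂) (TI k₁ k₂) ℂ) : Matrix (TI h₁ h₂) (TI h₁ h₂) ℂ :=
  Matrix.of fun p q =>
    match p, q with
    | Sum.inl a, Sum.inl b => φ₁ (blk11 X) a b + ω₂ (blk22 X) * P₁ a b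
    | Sum.inl _, Sum.inr (Sum.inl _) => 0
    | Sum.inl a, Sum.inr (Sum.inr _) => (B₁.mulVec (blk13 X) + C₁.mulVec (blk31 X)) a
    | Sum.inr (Sum.inl _), Sum.inl _ => 0
    | Sum.inr (Sum.inl a), Sum.inr (Sum.inl b) => φ₂ (blk22 X) a b + ω₁ (blk11 X) * P₂ a b
    | Sum.inr (Sum.inl a), Sum.inr (Sum.inr _) => (B₂.mulVec (blk23 X) + C₂.mulVec (blk32 X)) a
    | Sum.inr (Sum.inr _), Sum.inl b =>
        (Matrix.vecMul (blk31 X) B₁ᴴ + Matrix.vecMul (blk13 X) C₁ᴴ) b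
    | Sum.inr (Sum.inr _), Sum.inr (Sum.inl b) =>
        (Matrix.vecMul (blk32 X) B₂ᴴ + Matrix.vecMul (blk23 X) C₂ᴴ) b
    | Sum.inr (Sum.inr _), Sum.inr (Sum.inr _) => X tidx tidx

/-- The quantity `μᵢ(η, y) = √⟨y, φᵢ(ηη*) y⟩`. -/
def muQ {k h : ℕ} (φ : Matrix (Fin k) (Fin k) ℂ →ₗ[ℂ] Matrix (Fin h) (Fin h) ℂ)
    (η : Fin k → ℂ) (y : Fin h → ℂ) : ℝ :=
  Real.sqrt (star y ⬝ᵥ (φ (rankOne η)).mulVec y).re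

/-- The quantity `εᵢ(η, y) = |⟨y, Bη⟩| + |⟨y, C η̄⟩|`. -/
def epsQ {k h : ℕ} (B C : Matrix (Fin h) (Fin k) ℂ) (η : Fin k → ℂ) (y : Fin h → ℂ) : ℝ :=
  ‖star y ⬝ᵥ B.mulVec η‖ + ‖star y ⬝ᵥ C.mulVec (star η)‖

/-- The quantity `δᵢ(η, y) = √(μᵢ(η,y)² − εᵢ(η,y)²)`. -/
def deltaQ {k h : ℕ} (φ : Matrix (Fin k) (Fin k) ℂ →ₗ[ℂ] Matrix (Fin h) (Fin h) ℂ)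
    (B C : Matrix (Fin h) (Fin k) ℂ) (η : Fin k → ℂ) (y : Fin h → ℂ) : ℝ :=
  Real.sqrt (muQ φ η y ^ 2 - epsQ B C η y ^ 2)

/-- The quantity `σᵢ(η, y) = √(ωᵢ(ηη*))·‖P y‖`. -/
def sigmaQ {k h : ℕ} (ω : Matrix (Fin k) (Fin k) ℂ →ₗ[ℂ] ℂ)
    (P : Matrix (Fin h) (Fin h) ℂ) (η : Fin k → ℂ) (y : Fin h → ℂ) : ℝ :=
  Real.sqrt (ω (rankOne η)).re * Real.sqrt (star (P.mulVec y) ⬝ᵥ P.mulVec y).re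

/-- The map `M₃(ℂ) → M₃(ℂ)` determined by `b₁, b₂, c₁, c₂ ∈ ℂ` and
`δ₁, δ₂, σ₁, σ₂ ≥ 0`, with `εᵢ = |bᵢ| + |cᵢ|`. -/
def phi3 (b₁ b₂ c₁ c₂ : ℂ) (δ₁ δ₂ σ₁ σ₂ : ℝ) (X : Matrix (Fin 3) (Fin 3) ℂ) :
    Matrix (Fin 3) (Fin 3) ℂ :=
  !![(((‖b₁‖ + ‖c₁‖) ^ 2 + δ₁ ^ 2 : ℝ) : ℂ) * X 0 0 +
        ((σ₂ ^ 2 : ℝ) : ℂ) * X 1 1,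
      0, b₁ * X 0 2 + c₁ * X 2 0;
    0,
      (((‖b₂‖ + ‖c₂‖) ^ 2 + δ₂ ^ 2 : ℝ) : ℂ) * X 1 1 +
        ((σ₁ ^ 2 : ℝ) : ℂ) * X 0 0,
      b₂ * X 1 2 + c₂ * X 2 1;
    (starRingEnd ℂ) b₁ * X 2 0 + (starRingEnd ℂ) c₁ * X 0 2,
      (starRingEnd ℂ) b₂ * X 2 1 + (starRingEnd ℂ) c₂ * X 1 2, X 2 2]

/-!
If `φ = φ₁ + φ₂` with `φ₁` completely positive and `φ₂` completely copositive, the Choi matrix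
of `φ` is `A + B^Γ` with `A, B ⪰ 0`, `Γ` the partial transpose. Pairing it with a matrix `W`
such that `W ⪰ 0` and `W^Γ ⪰ 0` therefore gives `⟨W, C_φ⟩ ≥ 0`. Our `W` is a sum of rank-one
matrices on the pairs `{e_i ⊗ e_i, e_3 ⊗ e_3}` and `{e_i ⊗ e_3, e_3 ⊗ e_i}` and of a positive
diagonal, and `W^Γ` has the same form with the two families of coefficients exchanged. With
`β = ‖b⃗‖`, `γ = ‖c⃗‖` and coefficients `-(β + γ)/β · bᵢ`, `-(β + γ)/γ · c̄ᵢ` one finds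
`⟨W, C_φ⟩ = ε² + δ² - (β + γ)²`, which is negative since `s·√(ε² + δ²) < β² + γ² ≤ s·(β + γ)`.
-/
lemma _root_.Matrix.PosSemidef.pair_nonneg {ι : Type*} [Fintype ι] [DecidableEq ι]
    {M : Matrix ι ι ℂ} (hM : M.PosSemidef) (i j : ι) (x : ℂ) :
    0 ≤ M i i + x * M j i + star x * M i j + (‖x‖ ^ 2 : ℂ) * M j j := by
  convert hM.dotProduct_mulVec_nonneg (Pi.single i 1 + Pi.single j (star x)) using 1
  simp only [star_add, ← Pi.single_star, mulVec_add, add_dotProduct, dotProduct_add,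
    single_dotProduct, mulVec, dotProduct_single]
  simp only [RCLike.star_def, ← Complex.mul_conj', star_one, mul_one, one_mul,
    RingHomCompTriple.comp_apply, RingHom.id_apply]
  ring

def partialTranspose {α ι κ : Type*} (M : Matrix (ι × κ) (ι × κ) α) : Matrix (ι × κ) (ι × κ) α :=
  of fun p q => M (q.1, p.2) (p.1, q.2)

lemma Decomposable.exists_choi_eq_add_partialTranspose {ι κ : Type*} [Fintype ι] [DecidableEq ι]
    [Fintype κ] {φ : Matrix ι ι ℂ → Matrix κ κ ℂ} (hφ : Decomposable φ) :
    ∃ A B : Matrix (ι × κ) (ι × κ) ℂ, A.PosSemidef ∧ B.PosSemidef ∧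
      choi φ = A + partialTranspose B := by
  obtain ⟨φ₁, φ₂, h₁, h₂, hsum⟩ := hφ
  refine ⟨choi φ₁, choi fun X => φ₂ Xᵀ, h₁, h₂, ?_⟩
  ext p q
  simp [choi, partialTranspose, hsum, transpose_single]

section Witness

variable {k : ℕ} {m n : Fin k → ℂ} {p : ℝ}
  {M N : Matrix (Fin (k + 1) × Fin (k + 1)) (Fin (k + 1) × Fin (k + 1)) ℂ}

/-- `M ↦ ⟨W, M⟩` for the witness `W` of the header, with `ℓ = Fin.last k` in the role of `e_3`.
The weight `1 + p` on the entries `(i, ℓ)` and `(ℓ, i)` keeps both `W` and `W^Γ` positive. -/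
def witness (m n : Fin k → ℂ) (p : ℝ)
    (M : Matrix (Fin (k + 1) × Fin (k + 1)) (Fin (k + 1) × Fin (k + 1)) ℂ) : ℂ :=
  p * M (Fin.last k, Fin.last k) (Fin.last k, Fin.last k) + ∑ i : Fin k,
    (M (i.castSucc, i.castSucc) (i.castSucc, i.castSucc)
      + m i * M (Fin.last k, Fin.last k) (i.castSucc, i.castSucc)
      + star (m i) * M (i.castSucc, i.castSucc) (Fin.last k, Fin.last k)
      + (1 + p) * (M (i.castSucc, Fin.last k) (i.castSucc, Fin.last k)
        + M (Fin.last k, i.castSucc) (Fin.last k, i.castSucc))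
      + n i * M (Fin.last k, i.castSucc) (i.castSucc, Fin.last k)
      + star (n i) * M (i.castSucc, Fin.last k) (Fin.last k, i.castSucc))

lemma witness_add : witness m n p (M + N) = witness m n p M + witness m n p N := by
  simp only [witness, Matrix.add_apply, mul_add, Finset.sum_add_distrib]
  ring

lemma witness_partialTranspose :
    witness m n p (partialTranspose M) = witness (star n) (star m) p M := by
  simp only [witness, partialTranspose, of_apply, Pi.star_apply, star_star]
  congr 1
  refine Finset.sum_congr rfl fun i _ => ?_
  ring

lemma witness_nonneg (hM : M.PosSemidef) (hm : ∑ i, ‖m i‖ ^ 2 ≤ p) (hn : ∑ i, ‖n i‖ ^ 2 ≤ p) :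
    0 ≤ witness m n p M := by
  set ℓ := Fin.last k with hℓ
  have hsplit : witness m n p M = ((p - ∑ i, ‖m i‖ ^ 2 : ℝ) : ℂ) * M (ℓ, ℓ) (ℓ, ℓ) +
      ∑ i : Fin k, (
        (M (i.castSucc, i.castSucc) (i.castSucc, i.castSucc)
          + m i * M (ℓ, ℓ) (i.castSucc, i.castSucc)
          + star (m i) * M (i.castSucc, i.castSucc) (ℓ, ℓ) + (‖m i‖ ^ 2 : ℂ) * M (ℓ, ℓ) (ℓ, ℓ))
        + (M (i.castSucc, ℓ) (i.castSucc, ℓ) + n i * M (ℓ, i.castSucc) (i.castSucc, ℓ)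
          + star (n i) * M (i.castSucc, ℓ) (ℓ, i.castSucc)
          + (‖n i‖ ^ 2 : ℂ) * M (ℓ, i.castSucc) (ℓ, i.castSucc))
        + (p : ℂ) * M (i.castSucc, ℓ) (i.castSucc, ℓ)
        + ((1 + p - ‖n i‖ ^ 2 : ℝ) : ℂ) * M (ℓ, i.castSucc) (ℓ, i.castSucc)) := by
    rw [witness, ← hℓ, Complex.ofReal_sub, Complex.ofReal_sum, sub_mul, Finset.sum_mul, sub_add,
      ← Finset.sum_sub_distrib, sub_eq_add_neg, ← Finset.sum_neg_distrib]
    congr 1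
    refine Finset.sum_congr rfl fun i _ => ?_
    push_cast
    ring
  rw [hsplit]
  refine add_nonneg (mul_nonneg ?_ hM.diag_nonneg) (Finset.sum_nonneg fun i _ => ?_)
  · exact_mod_cast sub_nonneg.2 hm
  have hp : 0 ≤ p := (Finset.sum_nonneg fun i _ => sq_nonneg ‖m i‖).trans hm
  have hni : ‖n i‖ ^ 2 ≤ p :=
    (Finset.single_le_sum (fun j _ => sq_nonneg ‖n j‖) (Finset.mem_univ i)).trans hn
  have h₁ : (0 : ℂ) ≤ (p : ℂ) := by exact_mod_cast hp
  have h₂ : (0 : ℂ) ≤ ((1 + p - ‖n i‖ ^ 2 : ℝ) : ℂ) := by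
    exact_mod_cast (by linarith : (0 : ℝ) ≤ 1 + p - ‖n i‖ ^ 2)
  exact add_nonneg (add_nonneg (add_nonneg (hM.pair_nonneg _ _ _) (hM.pair_nonneg _ _ _))
    (mul_nonneg h₁ hM.diag_nonneg)) (mul_nonneg h₂ hM.diag_nonneg)

lemma Decomposable.witness_choi_nonneg
    {φ : Matrix (Fin (k + 1)) (Fin (k + 1)) ℂ → Matrix (Fin (k + 1)) (Fin (k + 1)) ℂ}
    (hφ : Decomposable φ) (hm : ∑ i, ‖m i‖ ^ 2 ≤ p) (hn : ∑ i, ‖n i‖ ^ 2 ≤ p) :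
    0 ≤ witness m n p (choi φ) := by
  obtain ⟨A, B, hA, hB, hchoi⟩ := hφ.exists_choi_eq_add_partialTranspose
  rw [hchoi, witness_add, witness_partialTranspose]
  exact add_nonneg (witness_nonneg hA hm hn)
    (witness_nonneg hB (by simpa using hn) (by simpa using hm))

end Witness

lemma sum_norm_sq_neg_div_smul {ι : Type*} [Fintype ι] (v : ι → ℂ) {r a : ℝ} (ha : a ≠ 0)
    (hv : ∑ i, ‖v i‖ ^ 2 = a ^ 2) : ∑ i, ‖(-((r / a : ℝ) : ℂ) • v) i‖ ^ 2 = r ^ 2 := by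
  simp only [Pi.smul_apply, smul_eq_mul, norm_mul, norm_neg, Complex.norm_real, Real.norm_eq_abs,
    mul_pow, sq_abs, ← Finset.mul_sum, hv]
  field_simp

lemma sq_norm_add_sq_norm_pos {E : Type*} [NormedAddCommGroup E] {x y : E}
    (h : ¬(x = 0 ∧ y = 0)) : 0 < ‖x‖ ^ 2 + ‖y‖ ^ 2 := by
  rcases not_and_or.1 h with h | h
  · have := norm_pos_iff.2 h; positivity
  · have := norm_pos_iff.2 h; positivity

lemma lt_add_of_max_mul_lt_sq_add_sq {a b r : ℝ} (ha : 0 ≤ a) (hb : 0 ≤ b)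
    (h : max a b * r < a ^ 2 + b ^ 2) : r < a + b := by
  have hab : a ^ 2 + b ^ 2 ≤ max a b * (a + b) := by
    nlinarith [le_max_left a b, le_max_right a b]
  have hmax : 0 < max a b := by
    refine (ha.trans (le_max_left a b)).lt_of_ne fun h0 => ?_
    rw [← h0, zero_mul] at h hab
    linarith
  exact lt_of_mul_lt_mul_left (h.trans_le hab) hmax.le

lemma witness_choi_phi3 (b₁ b₂ c₁ c₂ : ℂ) (δ₁ δ₂ σ₁ σ₂ s t p : ℝ) :
    witness (-(s : ℂ) • ![b₁, b₂]) (-(t : ℂ) • star ![c₁, c₂]) p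
        (choi (phi3 b₁ b₂ c₁ c₂ δ₁ δ₂ σ₁ σ₂)) =
      ((p + ((‖b₁‖ + ‖c₁‖) ^ 2 + δ₁ ^ 2) + ((‖b₂‖ + ‖c₂‖) ^ 2 + δ₂ ^ 2)
        - 2 * s * (‖b₁‖ ^ 2 + ‖b₂‖ ^ 2) - 2 * t * (‖c₁‖ ^ 2 + ‖c₂‖ ^ 2) : ℝ) : ℂ) := by
  simp only [witness, choi, Nat.succ_eq_add_one, Nat.reduceAdd, phi3, Complex.ofReal_add,
    Complex.ofReal_pow, single, Fin.isValue, of_apply, mul_ite, mul_one, mul_zero, cons_val',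
    cons_val_fin_one, Fin.reduceLast, Fin.reduceEq, and_self, ↓reduceIte, add_zero, and_true,
    and_false, cons_val, cons_val_one, Fin.castSucc_eq_zero_iff, Pi.smul_apply, smul_eq_mul,
    neg_mul, false_and, true_and, zero_add, mul_assoc, star_neg, star_mul', RCLike.star_def,
    Complex.conj_ofReal, Pi.star_apply, RingHomCompTriple.comp_apply, RingHom.id_apply,
    Fin.sum_univ_two, Fin.castSucc_zero, zero_ne_one, cons_val_zero, Complex.mul_conj',
    Complex.conj_mul', one_ne_zero, Fin.castSucc_one, Complex.ofReal_sub, Complex.ofReal_mul,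
    Complex.ofReal_ofNat]
  ring

lemma not_decomposable_phi3_of_lt (b₁ b₂ c₁ c₂ : ℂ) (δ₁ δ₂ σ₁ σ₂ : ℝ) {β γ : ℝ} (hβ : 0 < β)
    (hγ : 0 < γ) (hb : ‖b₁‖ ^ 2 + ‖b₂‖ ^ 2 = β ^ 2) (hc : ‖c₁‖ ^ 2 + ‖c₂‖ ^ 2 = γ ^ 2)
    (hlt : ((‖b₁‖ + ‖c₁‖) ^ 2 + δ₁ ^ 2) + ((‖b₂‖ + ‖c₂‖) ^ 2 + δ₂ ^ 2) < (β + γ) ^ 2) :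
    ¬Decomposable (phi3 b₁ b₂ c₁ c₂ δ₁ δ₂ σ₁ σ₂) := by
  intro hdec
  have hm := sum_norm_sq_neg_div_smul ![b₁, b₂] (r := β + γ) hβ.ne'
    (by simp [Fin.sum_univ_two, hb])
  have hn := sum_norm_sq_neg_div_smul (star ![c₁, c₂]) (r := β + γ) hγ.ne'
    (by simp [Fin.sum_univ_two, hc])
  have key := hdec.witness_choi_nonneg hm.le hn.le
  rw [witness_choi_phi3, Complex.zero_le_real, hb, hc] at key
  have hβ' : (β + γ) / β * β ^ 2 = (β + γ) * β := by field_simp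
  have hγ' : (β + γ) / γ * γ ^ 2 = (β + γ) * γ := by field_simp
  nlinarith

theorem statement18_general (b₁ b₂ c₁ c₂ : ℂ) (δ₁ δ₂ σ₁ σ₂ : ℝ)
    (hb : ¬(b₁ = 0 ∧ b₂ = 0)) (hc : ¬(c₁ = 0 ∧ c₂ = 0))
    (hineq :
      max (Real.sqrt (‖b₁‖ ^ 2 + ‖b₂‖ ^ 2))
          (Real.sqrt (‖c₁‖ ^ 2 + ‖c₂‖ ^ 2)) *
        Real.sqrt
          (((‖b₁‖ + ‖c₁‖) ^ 2 +
              (‖b₂‖ + ‖c₂‖) ^ 2) +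
            (δ₁ ^ 2 + δ₂ ^ 2)) <
      (‖b₁‖ ^ 2 + ‖b₂‖ ^ 2) +
        (‖c₁‖ ^ 2 + ‖c₂‖ ^ 2)) :
    ¬Decomposable (phi3 b₁ b₂ c₁ c₂ δ₁ δ₂ σ₁ σ₂) := by
  set β := √(‖b₁‖ ^ 2 + ‖b₂‖ ^ 2)
  set γ := √(‖c₁‖ ^ 2 + ‖c₂‖ ^ 2)
  have hβ2 : ‖b₁‖ ^ 2 + ‖b₂‖ ^ 2 = β ^ 2 := (Real.sq_sqrt (by positivity)).symm
  have hγ2 : ‖c₁‖ ^ 2 + ‖c₂‖ ^ 2 = γ ^ 2 := (Real.sq_sqrt (by positivity)).symm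
  have hβ : 0 < β := Real.sqrt_pos.2 (sq_norm_add_sq_norm_pos hb)
  have hγ : 0 < γ := Real.sqrt_pos.2 (sq_norm_add_sq_norm_pos hc)
  have hR := lt_add_of_max_mul_lt_sq_add_sq hβ.le hγ.le (by rwa [← hβ2, ← hγ2])
  refine not_decomposable_phi3_of_lt b₁ b₂ c₁ c₂ δ₁ δ₂ σ₁ σ₂ hβ hγ hβ2 hγ2 ?_
  linarith [(Real.sqrt_lt' (by positivity)).1 hR]

/-- If `phi3` is positive, `b⃗ = (|b₁|,|b₂|) ≠ 0`,
`c⃗ = (|c₁|,|c₂|) ≠ 0` and `s·√(ε² + δ²) < ‖b⃗‖² + ‖c⃗‖²`, where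
`s = max(‖b⃗‖, ‖c⃗‖)`, `ε² = ε₁² + ε₂²`, `δ² = δ₁² + δ₂²`, then `phi3` is not
decomposable. -/
theorem statement18 (b₁ b₂ c₁ c₂ : ℂ) (δ₁ δ₂ σ₁ σ₂ : ℝ)
    (hδ₁ : 0 ≤ δ₁) (hδ₂ : 0 ≤ δ₂) (hσ₁ : 0 ≤ σ₁) (hσ₂ : 0 ≤ σ₂)
    (hpos : IsPosMap (phi3 b₁ b₂ c₁ c₂ δ₁ δ₂ σ₁ σ₂))
    (hb : ¬(b₁ = 0 ∧ b₂ = 0)) (hc : ¬(c₁ = 0 ∧ c₂ = 0))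
    (hineq :
      max (Real.sqrt (‖b₁‖ ^ 2 + ‖b₂‖ ^ 2))
          (Real.sqrt (‖c₁‖ ^ 2 + ‖c₂‖ ^ 2)) *
        Real.sqrt
          (((‖b₁‖ + ‖c₁‖) ^ 2 +
              (‖b₂‖ + ‖c₂‖) ^ 2) +
            (δ₁ ^ 2 + δ₂ ^ 2)) <
      (‖b₁‖ ^ 2 + ‖b₂‖ ^ 2) +
        (‖c₁‖ ^ 2 + ‖c₂‖ ^ 2)) :
    ¬Decomposable (phi3 b₁ b₂ c₁ c₂ δ₁ δ₂ σ₁ σ₂) :=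
  statement18_general b₁ b₂ c₁ c₂ δ₁ δ₂ σ₁ σ₂ hb hc hineq

end Paper
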